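/- For every n ≥ 0 and all subsets I, J ⊆ [n] with I ∪ J ≠ [n], the entry A'_n(I, J) of the matrix A'_n = U_n A_n V_n equals 0. -/

import Mathlib

open Finset Polynomial
open scoped Classical

namespace AR

/-- `binVal I = r_n(I) - 1 = Σ_{i ∈ I} 2^(i-1)`. -/
def binVal (I : Finset ℕ) : ℕ := ∑ i ∈ I, 2 ^ (i - 1)

lemma binVal_Icc (m : ℕ) : binVal (Finset.Icc 1 m) = 2 ^ m - 1 := by
  induction m with
  | zero => simp [binVal]
  | succ k ih =>
      rw [binVal, Finset.sum_Icc_succ_top (by omega)]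
      rw [binVal] at ih
      rw [ih]
      have h1 : 1 ≤ 2 ^ k := Nat.one_le_two_pow
      simp only [Nat.add_sub_cancel, pow_succ]
      omega

lemma binVal_lt {n : ℕ} {I : Finset ℕ} (h : I ⊆ Finset.Icc 1 n) : binVal I < 2 ^ n := by
  have h1 : binVal I ≤ binVal (Finset.Icc 1 n) :=
    Finset.sum_le_sum_of_subset h
  have h2 := binVal_Icc n
  have h3 : 1 ≤ 2 ^ n := Nat.one_le_two_pow
  omega

/-- The row/column index (zero-based, i.e. `r_n(I) - 1`) corresponding to a subset `I ⊆ [n]`. -/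
def idx (n : ℕ) (I : Finset ℕ) (h : I ⊆ Finset.Icc 1 n) : Fin (2 ^ n) :=
  ⟨binVal I, binVal_lt h⟩

def blockEquiv (n : ℕ) : Fin (2 ^ n) ⊕ Fin (2 ^ n) ≃ Fin (2 ^ (n + 1)) :=
  finSumFinEquiv.trans (finCongr (by rw [pow_succ, mul_two]))

/-- The pair of Adin–Roichman matrices `(A_n, B_n)`, defined recursively. -/
def ABpair : (n : ℕ) → Matrix (Fin (2 ^ n)) (Fin (2 ^ n)) ℤ × Matrix (Fin (2 ^ n)) (Fin (2 ^ n)) ℤ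
  | 0 => (Matrix.of fun _ _ => 1, Matrix.of fun _ _ => 1)
  | n + 1 =>
      let p := ABpair n
      ((Matrix.reindex (blockEquiv n) (blockEquiv n)) (Matrix.fromBlocks p.1 p.1 p.1 (-p.2)),
       (Matrix.reindex (blockEquiv n) (blockEquiv n)) (Matrix.fromBlocks p.1 p.1 0 (-p.2)))

def A (n : ℕ) : Matrix (Fin (2 ^ n)) (Fin (2 ^ n)) ℤ := (ABpair n).1

def B (n : ℕ) : Matrix (Fin (2 ^ n)) (Fin (2 ^ n)) ℤ := (ABpair n).2

/-- `R` is a (nonempty) integer interval. -/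
def IsInterval (R : Finset ℕ) : Prop := ∃ a b : ℕ, R = Finset.Icc a b

/-- `R` is a run of `I`: a maximal nonempty interval contained in `I`. -/
def IsRun (I R : Finset ℕ) : Prop :=
  R.Nonempty ∧ IsInterval R ∧ R ⊆ I ∧
    ∀ S : Finset ℕ, IsInterval S → S ⊆ I → R ⊆ S → S = R

/-- `R` is a prefix of `S` : `min R = min S` and `R ⊆ S`. -/
def IsPrefixOf (R S : Finset ℕ) : Prop := R.min = S.min ∧ R ⊆ S

/-- `I ≫ J` : every run of `I ∩ J` is a prefix of a run of `I`. -/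
def Gg (I J : Finset ℕ) : Prop :=
  ∀ R : Finset ℕ, IsRun (I ∩ J) R → ∃ S : Finset ℕ, IsRun I S ∧ IsPrefixOf R S

/-- The set of runs of `I`. -/
noncomputable def runs (I : Finset ℕ) : Finset (Finset ℕ) :=
  I.powerset.filter (fun R => IsRun I R)

/-- `π(I)`: the product of (size + 1) over the runs of `I`. -/
noncomputable def piFun (I : Finset ℕ) : ℕ := ∏ R ∈ runs I, (R.card + 1)

/-- `π'_n(I)`: the product of (size + 1) over the runs of `I` not containing `n`. -/
noncomputable def piFun' (n : ℕ) (I : Finset ℕ) : ℕ :=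
  ∏ R ∈ (runs I).filter (fun R => n ∉ R), (R.card + 1)

/-- The subset of `[n]` encoded by a zero-based index `i : Fin (2^n)` (binary digits). -/
def decode (n : ℕ) (i : Fin (2 ^ n)) : Finset ℕ :=
  (Finset.Icc 1 n).filter (fun k => Nat.testBit i.val (k - 1))

/-- The matrix `U_n`, with `U_n(I,J) = 1` if `I ⊇ J` and `0` otherwise. -/
def U (n : ℕ) : Matrix (Fin (2 ^ n)) (Fin (2 ^ n)) ℤ :=
  Matrix.of fun i j => if decode n j ⊆ decode n i then 1 else 0

/-- The matrix `V_n = U_n⁻¹`, with `V_n(I,J) = (-1)^{|I \ J|}` if `I ⊇ J` and `0` otherwise. -/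
def V (n : ℕ) : Matrix (Fin (2 ^ n)) (Fin (2 ^ n)) ℤ :=
  Matrix.of fun i j =>
    if decode n j ⊆ decode n i then (-1) ^ ((decode n i) \ (decode n j)).card else 0

def A' (n : ℕ) : Matrix (Fin (2 ^ n)) (Fin (2 ^ n)) ℤ := U n * A n * V n

def B' (n : ℕ) : Matrix (Fin (2 ^ n)) (Fin (2 ^ n)) ℤ := U n * B n * V n

/-- `E ⪯ I` : `E ⊆ I`, `E` contains no minimal element of a run of `I`,
and `E` contains no two consecutive integers. -/
def SubPrec (E I : Finset ℕ) : Prop :=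
  E ⊆ I ∧ (∀ R : Finset ℕ, (h : IsRun I R) → R.min' h.1 ∉ E) ∧
    ∀ i : ℕ, ¬ (i ∈ E ∧ i + 1 ∈ E)

/-- `I ⇝ J` : `J = ([n] \ I) ∪ E` for some `E ⪯ I`. -/
def Step (n : ℕ) (I J : Finset ℕ) : Prop :=
  ∃ E : Finset ℕ, SubPrec E I ∧ J = (Finset.Icc 1 n \ I) ∪ E

/-- `π_μ` for a composition `μ` of `n`. -/
def piComp {n : ℕ} (μ : Composition n) : ℕ := (μ.blocks.map (· + 1)).prod

/-- `π'_μ` for a composition `μ` of `n`. -/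
def piComp' {n : ℕ} (μ : Composition n) : ℕ := (μ.blocks.dropLast.map (· + 1)).prod

/-- The Thue–Morse sequence: `thueMorse m = s₂(m) % 2`. -/
def thueMorse (m : ℕ) : ℕ := (Nat.digits 2 m).sum % 2

/-! Conjugating the block recursion by `U (n+1) = [[U, 0], [U, U]]` and `V (n+1) = [[V, 0], [-V, V]]`
gives `A' (n+1) = [[0, A'], [A' + B', A' - B']]` and `B' (n+1) = [[0, A'], [B', A' - B']]`, with the
index `n + 1 ∈ I` selecting the lower blocks. So by induction on `n` both `A'` and `B'` vanish at
`(I, J)` when `I ∪ J ≠ [n]`: if `n + 1 ∉ I ∪ J` the entry lies in the zero block, and otherwise it is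
a combination of entries of `A' n`, `B' n` at `(I \ {n+1}, J \ {n+1})`, whose union still misses a
point of `[n]`. -/

lemma fromBlocks_conj {m R : Type*} [Fintype m] [Ring R] (P Q X Z W : Matrix m m R) :
    Matrix.fromBlocks P 0 P P * Matrix.fromBlocks X X Z (-W) * Matrix.fromBlocks Q 0 (-Q) Q =
      Matrix.fromBlocks 0 (P * X * Q) (P * Z * Q + P * W * Q) (P * X * Q - P * W * Q) := by
  simp only [Matrix.fromBlocks_multiply, Matrix.fromBlocks_inj, Matrix.add_mul,
    Matrix.mul_neg, Matrix.neg_mul, Matrix.mul_zero, Matrix.zero_mul, Matrix.mul_assoc]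
  refine ⟨by abel, by abel, by abel, by abel⟩

lemma decode_subset_Icc (n : ℕ) (i : Fin (2 ^ n)) : decode n i ⊆ Finset.Icc 1 n :=
  Finset.filter_subset _ _

lemma succ_notMem_decode (n : ℕ) (i : Fin (2 ^ n)) : n + 1 ∉ decode n i :=
  fun h => by simpa using decode_subset_Icc n i h

lemma decode_blockEquiv_inl (n : ℕ) (i : Fin (2 ^ n)) :
    decode (n + 1) (blockEquiv n (Sum.inl i)) = decode n i := by
  ext k
  simp only [decode, Finset.mem_filter, Finset.mem_Icc]
  change (_ ∧ Nat.testBit i.val (k - 1)) ↔ _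
  have htop := Nat.testBit_lt_two_pow i.isLt
  grind

lemma decode_blockEquiv_inr (n : ℕ) (i : Fin (2 ^ n)) :
    decode (n + 1) (blockEquiv n (Sum.inr i)) = insert (n + 1) (decode n i) := by
  ext k
  simp only [decode, Finset.mem_filter, Finset.mem_Icc, Finset.mem_insert]
  change (_ ∧ Nat.testBit (2 ^ n + i.val) (k - 1)) ↔ _
  have hbit := Nat.testBit_two_pow_mul_add 1 i.isLt (k - 1)
  rw [Nat.mul_one] at hbit
  rw [hbit]
  have hone : Nat.testBit 1 0 = true := rfl
  grind

lemma U_succ (n : ℕ) : U (n + 1) = Matrix.reindex (blockEquiv n) (blockEquiv n)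
    (Matrix.fromBlocks (U n) 0 (U n) (U n)) := by
  ext i j
  obtain ⟨x, rfl⟩ := (blockEquiv n).surjective i
  obtain ⟨y, rfl⟩ := (blockEquiv n).surjective j
  rcases x with x | x <;> rcases y with y | y <;>
    simp [U, decode_blockEquiv_inl, decode_blockEquiv_inr, succ_notMem_decode,
      Finset.insert_subset_iff, Finset.subset_insert_iff_of_notMem]

lemma V_succ (n : ℕ) : V (n + 1) = Matrix.reindex (blockEquiv n) (blockEquiv n)
    (Matrix.fromBlocks (V n) 0 (-V n) (V n)) := by
  ext i j
  obtain ⟨x, rfl⟩ := (blockEquiv n).surjective i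
  obtain ⟨y, rfl⟩ := (blockEquiv n).surjective j
  rcases x with x | x <;> rcases y with y | y <;>
    simp [V, decode_blockEquiv_inl, decode_blockEquiv_inr, succ_notMem_decode,
      Finset.insert_subset_iff, Finset.subset_insert_iff_of_notMem,
      Finset.insert_sdiff_of_notMem, Finset.sdiff_insert_of_notMem,
      Finset.card_insert_of_notMem, pow_succ, apply_ite Neg.neg]

lemma conj_reindex_succ (n : ℕ) (M : Matrix (Fin (2 ^ n) ⊕ Fin (2 ^ n)) (Fin (2 ^ n) ⊕ Fin (2 ^ n)) ℤ) :
    U (n + 1) * Matrix.reindex (blockEquiv n) (blockEquiv n) M * V (n + 1) =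
      Matrix.reindex (blockEquiv n) (blockEquiv n)
        (Matrix.fromBlocks (U n) 0 (U n) (U n) * M * Matrix.fromBlocks (V n) 0 (-V n) (V n)) := by
  simp only [U_succ, V_succ, Matrix.reindex_apply, Matrix.submatrix_mul_equiv]

lemma A_succ (n : ℕ) : A (n + 1) = Matrix.reindex (blockEquiv n) (blockEquiv n)
    (Matrix.fromBlocks (A n) (A n) (A n) (-B n)) := rfl

lemma B_succ (n : ℕ) : B (n + 1) = Matrix.reindex (blockEquiv n) (blockEquiv n)
    (Matrix.fromBlocks (A n) (A n) 0 (-B n)) := rfl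

lemma A'_succ (n : ℕ) : A' (n + 1) = Matrix.reindex (blockEquiv n) (blockEquiv n)
    (Matrix.fromBlocks 0 (A' n) (A' n + B' n) (A' n - B' n)) := by
  rw [A', A_succ, conj_reindex_succ, fromBlocks_conj]
  rfl

lemma B'_succ (n : ℕ) : B' (n + 1) = Matrix.reindex (blockEquiv n) (blockEquiv n)
    (Matrix.fromBlocks 0 (A' n) (B' n) (A' n - B' n)) := by
  rw [B', B_succ, conj_reindex_succ, fromBlocks_conj, Matrix.mul_zero, Matrix.zero_mul, zero_add]
  rfl

lemma ne_Icc_of_insert_ne {n : ℕ} {S : Finset ℕ} (h : insert (n + 1) S ≠ Finset.Icc 1 (n + 1)) :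
    S ≠ Finset.Icc 1 n := by
  rintro rfl
  exact h (Finset.insert_Icc_right_eq_Icc_add_one (by omega))

lemma A'_B'_eq_zero_of_union_ne (n : ℕ) (i j : Fin (2 ^ n))
    (h : decode n i ∪ decode n j ≠ Finset.Icc 1 n) : A' n i j = 0 ∧ B' n i j = 0 := by
  induction n with
  | zero => simp [decode] at h
  | succ n ih =>
    obtain ⟨x, rfl⟩ := (blockEquiv n).surjective i
    obtain ⟨y, rfl⟩ := (blockEquiv n).surjective j
    rw [A'_succ, B'_succ]
    simp only [Matrix.reindex_apply, Matrix.submatrix_apply, Equiv.symm_apply_apply]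
    rcases x with x | x <;> rcases y with y | y <;>
      simp only [decode_blockEquiv_inl, decode_blockEquiv_inr, Finset.union_insert,
        Finset.insert_union, Finset.insert_idem] at h
    · simp
    all_goals
      obtain ⟨hA, hB⟩ := ih x y (ne_Icc_of_insert_ne h)
      simp [hA, hB]

lemma testBit_sum_two_pow (s : Finset ℕ) (m : ℕ) : (∑ i ∈ s, 2 ^ i).testBit m ↔ m ∈ s := by
  rw [← Nat.mem_bitIndices, ← List.mem_toFinset, Finset.toFinset_bitIndices_sum_two_pow]

lemma binVal_eq_sum_image {I : Finset ℕ} (hI : 0 ∉ I) :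
    binVal I = ∑ j ∈ I.image (· - 1), 2 ^ j := by
  rw [binVal, Finset.sum_image]
  intro a ha b hb
  grind

lemma decode_idx {n : ℕ} {I : Finset ℕ} (hI : I ⊆ Finset.Icc 1 n) : decode n (idx n I hI) = I := by
  have h0 : 0 ∉ I := fun h => by simpa using hI h
  ext k
  simp only [decode, idx, Finset.mem_filter, binVal_eq_sum_image h0, testBit_sum_two_pow,
    Finset.mem_image]
  grind

theorem stmt6 (n : ℕ) (I J : Finset ℕ) (hI : I ⊆ Finset.Icc 1 n) (hJ : J ⊆ Finset.Icc 1 n)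
    (hIJ : I ∪ J ≠ Finset.Icc 1 n) :
    A' n (idx n I hI) (idx n J hJ) = 0 :=
  (A'_B'_eq_zero_of_union_ne n _ _ (by rwa [decode_idx, decode_idx])).1

end AR
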